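/- Let k ≥ 1 and let t_1,...,t_k, s be pairwise distinct complex numbers. Then the sum over all permutations π of {1,...,k} of 1/((t_{π(1)} - t_{π(2)})(t_{π(2)} - t_{π(3)})···(t_{π(k-1)} - t_{π(k)})(t_{π(k)} - s)) equals (-1)^k / ∏_{j=1}^k (s - t_j). -/

import Mathlib

/-!
Sort the permutations by the node `t i` they place last. The chains ending in `t i`
contribute `1 / (t i - s)` times the same sum for the remaining `k - 1` nodes with endpoint `t i`,
which by induction is `(-1)^(k-1)` times the barycentric weight `∏_{j ≠ i} (t i - t j)⁻¹`.
Summing over `i` leaves the barycentric form of the Lagrange interpolant of the constant `1`,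
`∑ i, w_i / (s - t i) = 1 / ∏ j, (s - t j)`.
-/

open Finset Lagrange

theorem Lagrange.sum_nodalWeight_mul_inv_sub {F ι : Type*} [Field F] [DecidableEq ι]
    {s : Finset ι} {v : ι → F} {x : F} (hvs : Set.InjOn v s) (hs : s.Nonempty)
    (hx : ∀ i ∈ s, x ≠ v i) :
    ∑ i ∈ s, nodalWeight s v i * (x - v i)⁻¹ = (∏ i ∈ s, (x - v i))⁻¹ := by
  apply eq_inv_of_mul_eq_one_right
  simpa [interpolate_one hvs hs, eval_nodal] using (eval_interpolate_not_at_node 1 hx).symm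

theorem Fin.prod_succAbove_eq_prod_erase {M : Type*} [CommMonoid M] {n : ℕ} (i : Fin (n + 1))
    (f : Fin (n + 1) → M) :
    ∏ j : Fin n, f (i.succAbove j) = ∏ j ∈ univ.erase i, f j := by
  rw [← compl_singleton, ← Fin.image_succAbove_univ,
    prod_image fun _ _ _ _ h => Fin.succAbove_right_injective h]

theorem Fin.nodalWeight_univ {F : Type*} [Field F] {n : ℕ} (t : Fin (n + 1) → F)
    (i : Fin (n + 1)) :
    nodalWeight univ t i = (∏ j : Fin n, (t i - t (i.succAbove j)))⁻¹ := by
  rw [nodalWeight, prod_inv_distrib, Fin.prod_succAbove_eq_prod_erase i (fun j => t i - t j)]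

namespace Fin

variable {n : ℕ}

def permWithLast (i : Fin (n + 2)) (σ : Equiv.Perm (Fin (n + 1))) : Equiv.Perm (Fin (n + 2)) :=
  (finSuccEquiv' (last (n + 1))).trans ((Equiv.optionCongr σ).trans (finSuccEquiv' i).symm)

@[simp]
theorem permWithLast_last (i : Fin (n + 2)) (σ : Equiv.Perm (Fin (n + 1))) :
    permWithLast i σ (last (n + 1)) = i := by
  simp [permWithLast, finSuccEquiv'_at]

@[simp]
theorem permWithLast_castSucc (i : Fin (n + 2)) (σ : Equiv.Perm (Fin (n + 1)))
    (m : Fin (n + 1)) :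
    permWithLast i σ m.castSucc = i.succAbove (σ m) := by
  simp [permWithLast, finSuccEquiv'_last_apply_castSucc]

theorem permWithLast_bijective :
    Function.Bijective fun p : Fin (n + 2) × Equiv.Perm (Fin (n + 1)) => permWithLast p.1 p.2 := by
  rw [Fintype.bijective_iff_injective_and_card]
  refine ⟨?_, by simp [Fintype.card_perm, Nat.factorial_succ]⟩
  rintro ⟨i, σ⟩ ⟨i', σ'⟩ h
  obtain rfl : i = i' := by simpa using congrArg (· (last (n + 1))) h
  have hσ : σ = σ' := Equiv.ext fun m => succAbove_right_injective (p := i) <| by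
    simpa using congrArg (· m.castSucc) h
  rw [hσ]

theorem sum_perm_eq_sum_permWithLast {M : Type*} [AddCommMonoid M]
    (f : Equiv.Perm (Fin (n + 2)) → M) :
    ∑ π, f π = ∑ i, ∑ σ, f (permWithLast i σ) := by
  rw [← Fintype.sum_prod_type', Fintype.sum_bijective _ permWithLast_bijective _ _ fun _ => rfl]

end Fin

def chainProd {R : Type*} [CommRing R] {n : ℕ} (t : Fin (n + 1) → R) (s : R) : R :=
  (∏ i : Fin n, (t i.castSucc - t i.succ)) * (t (Fin.last n) - s)

section chainProd

variable {R : Type*} [CommRing R]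

theorem chainProd_zero (t : Fin 1 → R) (s : R) : chainProd t s = t 0 - s := by
  simp [chainProd]

theorem chainProd_succ {n : ℕ} (t : Fin (n + 2) → R) (s : R) :
    chainProd t s =
      chainProd (t ∘ Fin.castSucc) (t (Fin.last (n + 1))) * (t (Fin.last (n + 1)) - s) := by
  simp only [chainProd, Fin.prod_univ_castSucc, Fin.succ_castSucc, Fin.succ_last,
    Function.comp_apply]

theorem chainProd_comp_permWithLast {n : ℕ} (t : Fin (n + 2) → R) (s : R)
    (i : Fin (n + 2)) (σ : Equiv.Perm (Fin (n + 1))) :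
    chainProd (t ∘ Fin.permWithLast i σ) s =
      chainProd ((t ∘ i.succAbove) ∘ σ) (t i) * (t i - s) := by
  rw [chainProd_succ]
  congr 2 <;> simp [Function.comp_def]

end chainProd

theorem sum_perm_one_div_chainProd {K : Type*} [Field K] (n : ℕ) (t : Fin (n + 1) → K) (s : K)
    (ht : Function.Injective t) (hs : ∀ j, s ≠ t j) :
    ∑ π : Equiv.Perm (Fin (n + 1)), 1 / chainProd (t ∘ π) s =
      (-1) ^ (n + 1) / ∏ j, (s - t j) := by
  induction n generalizing s with
  | zero =>
    rw [Fintype.sum_unique (ι := Equiv.Perm (Fin 1)), chainProd_zero, Function.comp_apply,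
      Subsingleton.elim ((default : Equiv.Perm (Fin 1)) 0) 0, Fin.prod_univ_one, ← neg_sub,
      one_div_neg_eq_neg_one_div]
    ring
  | succ n ih =>
    have hchains (i : Fin (n + 2)) :
        ∑ σ, 1 / chainProd (t ∘ Fin.permWithLast i σ) s =
          (-1) ^ (n + 2) * (nodalWeight univ t i * (s - t i)⁻¹) := by
      have ht' : Function.Injective (t ∘ i.succAbove) := ht.comp Fin.succAbove_right_injective
      have hs' (j : Fin (n + 1)) : t i ≠ (t ∘ i.succAbove) j := fun h =>
        Fin.succAbove_ne i j (ht h).symm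
      calc ∑ σ, 1 / chainProd (t ∘ Fin.permWithLast i σ) s
          = (∑ σ : Equiv.Perm (Fin (n + 1)), 1 / chainProd ((t ∘ i.succAbove) ∘ ⇑σ) (t i)) *
              (t i - s)⁻¹ := by
            simp_rw [chainProd_comp_permWithLast, sum_mul, one_div, mul_inv]
        _ = (-1) ^ (n + 1) / (∏ j, (t i - t (i.succAbove j))) * (t i - s)⁻¹ := by
            rw [ih _ _ ht' hs']
            rfl
        _ = (-1) ^ (n + 2) * (nodalWeight univ t i * (s - t i)⁻¹) := by
            rw [Fin.nodalWeight_univ, ← neg_sub s, inv_neg]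
            ring
    rw [Fin.sum_perm_eq_sum_permWithLast, sum_congr rfl fun i _ => hchains i, ← mul_sum,
      sum_nodalWeight_mul_inv_sub ht.injOn univ_nonempty fun j _ => hs j, div_eq_mul_inv]

/-- Identity (III): symmetrization of the chain product with endpoint `s`. -/
theorem identity_III (n : ℕ) (t : Fin (n + 1) → ℂ) (s : ℂ)
    (ht : Function.Injective t) (hs : ∀ j, s ≠ t j) :
    ∑ π : Equiv.Perm (Fin (n + 1)),
      1 / ((∏ i : Fin n, (t (π i.castSucc) - t (π i.succ))) *
        (t (π (Fin.last n)) - s))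
    = (-1) ^ (n + 1) / ∏ j, (s - t j) :=
  sum_perm_one_div_chainProd n t s ht hs
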